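/- arXiv:0910.5580 — 2 statements merged into one kernel-verified Lean document; each statement's English description precedes it below -/
import Mathlib

section
/- Let W be a standard one-dimensional Brownian motion and 0 < T₁ < T. If tW(T₁)T₁ + t∫_{T₁}^t W(s)ds − t²W(T₁) = 0 almost surely for all t ∈ [T₁,T], then W(t) = W(T₁) almost surely for all t ∈ [T₁,T], which is a contradiction (this event has probability 0). Hence no such identity can hold. -/
open MeasureTheory Set ProbabilityTheory
open scoped ENNReal NNReal

/-!
Dividing the identity by `t > 0` gives `∫_{T₁}^t W(s) ds = (t - T₁) W(T₁)`. Almost surely this holds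
simultaneously for all rational `t ∈ (T₁, T)`, hence, both sides being continuous in `t`, for all
`t ∈ (T₁, T)`; differentiating in `t` yields `W(t) = W(T₁)`. But `W(t) - W(T₁)` is a nondegenerate
Gaussian, which has no atom at `0`.
-/

section Pathwise

variable {f : ℝ → ℝ} {a b : ℝ}

theorem integral_eq_sub_mul_of_dense (hf : Continuous f) {D : Set ℝ} (hD : Dense D)
    (h : ∀ t ∈ Ioo a b ∩ D, ∫ s in a..t, f s = (t - a) * f a) :
    ∀ t ∈ Ioo a b, ∫ s in a..t, f s = (t - a) * f a :=
  EqOn.of_subset_closure h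
    (intervalIntegral.continuous_primitive (fun _ _ => hf.intervalIntegrable _ _) a).continuousOn
    (by fun_prop) inter_subset_left (hD.open_subset_closure_inter isOpen_Ioo)

theorem eq_of_integral_eq_sub_mul (hf : Continuous f)
    (h : ∀ t ∈ Ioo a b, ∫ s in a..t, f s = (t - a) * f a) :
    ∀ t ∈ Ioo a b, f t = f a := by
  intro t ht
  have hprimitive : HasDerivAt (fun u => ∫ s in a..u, f s) (f t) t :=
    (hf.integral_hasStrictDerivAt a t).hasDerivAt
  have hlinear : HasDerivAt (fun u => (u - a) * f a) (1 * f a) t :=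
    ((hasDerivAt_id t).sub_const a).mul_const (f a)
  have heq : (fun u => (u - a) * f a) =ᶠ[nhds t] fun u => ∫ s in a..u, f s :=
    Filter.eventually_of_mem (isOpen_Ioo.mem_nhds ht) fun u hu => (h u hu).symm
  simpa using (hprimitive.congr_of_eventuallyEq heq).unique hlinear

end Pathwise

theorem not_ae_eq_of_map_eq_gaussianReal {Ω : Type*} [MeasurableSpace Ω] {μ : Measure Ω}
    {X : Ω → ℝ} {m : ℝ} {v : ℝ≥0} (hv : v ≠ 0) (hX : μ.map X = gaussianReal m v) (c : ℝ) :
    ¬ ∀ᵐ ω ∂μ, X ω = c := by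
  intro h
  have hconst : gaussianReal m v = μ univ • Measure.dirac c := by
    rw [← hX, Measure.map_congr h, Measure.map_const]
  have hatom := nullSingletonClass_gaussianReal (μ := m) hv
  have hmass : μ univ = 1 := by
    simpa using (congrArg (fun ν : Measure ℝ => ν univ) hconst).symm
  simpa [hmass] using congrArg (fun ν : Measure ℝ => ν {c}) hconst

theorem stmt5_general {Ω : Type*} [MeasurableSpace Ω] (μ : Measure Ω)
    (T₁ T : ℝ) (hT₁ : 0 < T₁) (hT : T₁ < T)
    (W : ℝ → Ω → ℝ)
    (hWcont : ∀ ω, Continuous (fun t => W t ω))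
    (hWgauss : ∀ s t : ℝ, s ≤ t →
      Measure.map (fun ω => W t ω - W s ω) μ = gaussianReal 0 (Real.toNNReal (t - s)))
    (hId : ∀ t ∈ Icc T₁ T, ∀ᵐ ω ∂μ,
      t * W T₁ ω * T₁ + t * (∫ s in T₁..t, W s ω) - t ^ 2 * W T₁ ω = 0) :
    False := by
  obtain ⟨t₀, ht₀⟩ := nonempty_Ioo.mpr hT
  have hrat : ∀ᵐ ω ∂μ, ∀ t ∈ Ioo T₁ T ∩ range ((↑) : ℚ → ℝ),
      ∫ s in T₁..t, W s ω = (t - T₁) * W T₁ ω := by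
    rw [ae_ball_iff ((countable_range _).mono inter_subset_right)]
    intro t ht
    filter_upwards [hId t (Ioo_subset_Icc_self ht.1)] with ω hω
    have ht_ne : t ≠ 0 := (hT₁.trans ht.1.1).ne'
    exact mul_left_cancel₀ ht_ne (by linear_combination hω)
  have hconst : ∀ᵐ ω ∂μ, W t₀ ω - W T₁ ω = 0 := by
    filter_upwards [hrat] with ω hω
    rw [sub_eq_zero]
    exact eq_of_integral_eq_sub_mul (hWcont ω)
      (integral_eq_sub_mul_of_dense (hWcont ω) Rat.denseRange_cast hω) t₀ ht₀
  refine not_ae_eq_of_map_eq_gaussianReal ?_ (hWgauss T₁ t₀ ht₀.1.le) 0 hconst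
  simpa using ht₀.1

/-- Let `W` be a standard one-dimensional Brownian motion (continuous paths,
`W 0 = 0`, Gaussian increments) and `0 < T₁ < T`. The identity
`t·W(T₁)·T₁ + t·∫_{T₁}^t W(s) ds − t²·W(T₁) = 0` a.s. for all `t ∈ [T₁,T]` forces
`W(t) = W(T₁)` on `[T₁,T]`, an event of probability zero; hence no such identity can hold. -/
theorem stmt5 {Ω : Type*} [MeasurableSpace Ω] (μ : Measure Ω) [IsProbabilityMeasure μ]
    (T₁ T : ℝ) (hT₁ : 0 < T₁) (hT : T₁ < T)
    (W : ℝ → Ω → ℝ)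
    (hWmeas : ∀ t, Measurable (W t))
    (hWcont : ∀ ω, Continuous (fun t => W t ω))
    (hW0 : ∀ ω, W 0 ω = 0)
    (hWgauss : ∀ s t : ℝ, s ≤ t →
      Measure.map (fun ω => W t ω - W s ω) μ = gaussianReal 0 (Real.toNNReal (t - s)))
    (hId : ∀ t ∈ Icc T₁ T, ∀ᵐ ω ∂μ,
      t * W T₁ ω * T₁ + t * (∫ s in T₁..t, W s ω) - t ^ 2 * W T₁ ω = 0) :
    False :=
  stmt5_general μ T₁ T hT₁ hT W hWcont hWgauss hId
end

section
/- Let f : Δ^c × R → R be positively homogeneous: f(t,s,λy) = λf(t,s,y) for all λ > 0. If (Y,Z) is the unique adapted S-solution of Y(t) = −ψ(t) + ∫_t^T (f(t,s,Y(s)) + r₁(s)Z(t,s) + r₂(s)Z(s,t)) ds − ∫_t^T Z(t,s)dW(s), then for λ > 0 the pair (λY, λZ) is the unique adapted S-solution of the same equation with ψ replaced by λψ. Hence ρ(t; λψ) = λρ(t; ψ) a.s., where ρ(t;ψ) := Y(t). -/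
open MeasureTheory Set

/-- `(Y,Z)` is an adapted S-solution of the BSVIE
`Y(t) = −ψ(t) + ∫_t^T (h(t,s,Y(s)) + r₁(s)Z(t,s) + r₂(s)Z(s,t)) ds − ∫_t^T Z(t,s) dW(s)`
on `[0,T]`, where `ito a b f` denotes the Itô integral `∫_a^b f(s) dW(s)`:
the equation holds a.s. for every `t` and `Z` is symmetric: `Z(t,s) = Z(s,t)` a.s. -/
def IsSSolution {Ω : Type*} [MeasurableSpace Ω] (μ : Measure Ω)
    (ito : ℝ → ℝ → (ℝ → Ω → ℝ) → Ω → ℝ) (T : ℝ) (r₁ r₂ : ℝ → ℝ)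
    (h : ℝ → ℝ → ℝ → ℝ) (ψ : ℝ → Ω → ℝ)
    (Y : ℝ → Ω → ℝ) (Z : ℝ → ℝ → Ω → ℝ) : Prop :=
  (∀ t ∈ Icc 0 T, ∀ᵐ ω ∂μ,
    Y t ω = -ψ t ω
      + (∫ s in Icc t T, (h t s (Y s ω) + r₁ s * Z t s ω + r₂ s * Z s t ω))
      - ito t T (fun s => Z t s) ω) ∧
  (∀ t ∈ Icc 0 T, ∀ s ∈ Icc 0 T, ∀ᵐ ω ∂μ, Z t s ω = Z s t ω)

theorem integral_homogeneous_generator_smul {α : Type*} [MeasurableSpace α] (ν : Measure α)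
    (g : α → ℝ → ℝ) (a b : α → ℝ) {l : ℝ} (hg : ∀ s y, g s (l * y) = l * g s y)
    (y z₁ z₂ : α → ℝ) :
    ∫ s, (g s (l * y s) + a s * (l * z₁ s) + b s * (l * z₂ s)) ∂ν
      = l * ∫ s, (g s (y s) + a s * z₁ s + b s * z₂ s) ∂ν := by
  rw [← integral_const_mul]
  congr 1 with s
  rw [hg]
  ring

theorem stmt12_general {Ω : Type*} [MeasurableSpace Ω] (μ : Measure Ω)
    (T : ℝ)
    (f : ℝ → ℝ → ℝ → ℝ) (r₁ r₂ : ℝ → ℝ)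
    (hhom : ∀ t s (y : ℝ) (l : ℝ), 0 < l → f t s (l * y) = l * f t s y)
    (ito : ℝ → ℝ → (ℝ → Ω → ℝ) → Ω → ℝ)
    -- positive homogeneity of the Itô integral
    (hito_smul : ∀ a b (c : ℝ) (g : ℝ → Ω → ℝ),
      ito a b (fun s ω => c * g s ω) = fun ω => c * ito a b g ω)
    (ψ : ℝ → Ω → ℝ) (l : ℝ) (hl : 0 < l)
    (Y : ℝ → Ω → ℝ) (Z : ℝ → ℝ → Ω → ℝ)
    (hsol : IsSSolution μ ito T r₁ r₂ f ψ Y Z) :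
    IsSSolution μ ito T r₁ r₂ f (fun t ω => l * ψ t ω)
      (fun t ω => l * Y t ω) (fun t s ω => l * Z t s ω) := by
  obtain ⟨hequation, hsymm⟩ := hsol
  refine ⟨fun t ht => ?_, fun t ht s hs => ?_⟩
  · filter_upwards [hequation t ht] with ω hω
    rw [integral_homogeneous_generator_smul _ _ _ _ (fun s y => hhom t s y l hl),
      hito_smul, hω]
    ring
  · filter_upwards [hsymm t ht s hs] with ω hω
    rw [hω]

/-- If `f` is positively homogeneous in `y` and `(Y,Z)` is the adapted
S-solution of `Y(t) = −ψ(t) + ∫_t^T (f(t,s,Y(s)) + r₁(s)Z(t,s) + r₂(s)Z(s,t)) ds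
− ∫_t^T Z(t,s)dW(s)`, then for `λ > 0` the pair `(λY, λZ)` is an adapted S-solution of the
same BSVIE with `ψ` replaced by `λψ`; hence `ρ(t;λψ) = λρ(t;ψ)` where `ρ(t;ψ) := Y(t)`. -/
theorem stmt12 {Ω : Type*} [MeasurableSpace Ω] (μ : Measure Ω) [IsProbabilityMeasure μ]
    (T : ℝ) (hT : 0 < T)
    (f : ℝ → ℝ → ℝ → ℝ) (r₁ r₂ : ℝ → ℝ)
    -- `exp(½∫_0^T rᵢ² ds) < ∞`, i.e. the deterministic functions `rᵢ` are square integrable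
    (hr₁ : IntegrableOn (fun s => r₁ s ^ 2) (Icc 0 T) volume)
    (hr₂ : IntegrableOn (fun s => r₂ s ^ 2) (Icc 0 T) volume)
    (hhom : ∀ t s (y : ℝ) (l : ℝ), 0 < l → f t s (l * y) = l * f t s y)
    (ito : ℝ → ℝ → (ℝ → Ω → ℝ) → Ω → ℝ)
    -- positive homogeneity of the Itô integral
    (hito_smul : ∀ a b (c : ℝ) (g : ℝ → Ω → ℝ),
      ito a b (fun s ω => c * g s ω) = fun ω => c * ito a b g ω)
    (ψ : ℝ → Ω → ℝ) (l : ℝ) (hl : 0 < l)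
    (Y : ℝ → Ω → ℝ) (Z : ℝ → ℝ → Ω → ℝ)
    (hsol : IsSSolution μ ito T r₁ r₂ f ψ Y Z) :
    IsSSolution μ ito T r₁ r₂ f (fun t ω => l * ψ t ω)
      (fun t ω => l * Y t ω) (fun t s ω => l * Z t s ω) :=
  stmt12_general μ T f r₁ r₂ hhom ito hito_smul ψ l hl Y Z hsol
end
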